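/- arXiv:1504.02251 — 3 statements merged into one kernel-verified Lean document; each statement's English description precedes it below -/
import Mathlib

section
/- For any integer p ≥ 3 and real r with |r| < 1, the quantities 1 + (p r^p − (p−1) r^{p−2}) and 1 − (p r^p − (p−1) r^{p−2}) are both strictly positive. -/
theorem bern (n : ℕ) (hn : 1 ≤ n) : 2 * ((n:ℝ)+1)^(n+1) ≤ ((n:ℝ)+2)^(n+1) := by
  have h0 : (0:ℝ) < (n:ℝ) + 1 := by positivity
  have hnn : (0:ℝ) ≤ 1/((n:ℝ)+1) := by positivity
  have hb := one_add_mul_le_pow (a := 1/((n:ℝ)+1)) (by linarith) (n+1)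
  have h2 : (2:ℝ) ≤ (1 + 1/((n:ℝ)+1))^(n+1) := by
    refine le_trans ?_ hb
    push_cast
    rw [div_eq_inv_mul, ← mul_assoc, mul_inv_cancel₀ (by positivity)]
    norm_num
  calc 2 * ((n:ℝ)+1)^(n+1) ≤ (1 + 1/((n:ℝ)+1))^(n+1) * ((n:ℝ)+1)^(n+1) :=
        mul_le_mul_of_nonneg_right h2 (by positivity)
    _ = ((1 + 1/((n:ℝ)+1)) * ((n:ℝ)+1))^(n+1) := (mul_pow _ _ _).symm
    _ = ((n:ℝ)+2)^(n+1) := by rw [add_mul, one_mul, div_mul_cancel₀ _ (ne_of_gt h0)]; ring_nf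

-- C2: 4*(a-2)^n*(a-1)^(n+2) < a^(2n+2), a = n+2
theorem C2 (n : ℕ) (hn : 1 ≤ n) :
    4 * (n:ℝ)^n * ((n:ℝ)+1)^(n+2) < ((n:ℝ)+2)^(2*n+2) := by
  have hs : (n:ℝ)^n < ((n:ℝ)+1)^n := by
    apply pow_lt_pow_left₀ (by linarith) (Nat.cast_nonneg n)
    omega
  have hb := bern n hn
  have h1 : 4 * (n:ℝ)^n * ((n:ℝ)+1)^(n+2) < 4 * ((n:ℝ)+1)^n * ((n:ℝ)+1)^(n+2) := by
    have : (0:ℝ) < 4 * ((n:ℝ)+1)^(n+2) := by positivity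
    nlinarith [pow_pos (show (0:ℝ) < (n:ℝ)+1 by positivity) (n+2)]
  refine h1.trans_le ?_
  have h2 : 4 * ((n:ℝ)+1)^n * ((n:ℝ)+1)^(n+2) = (2 * ((n:ℝ)+1)^(n+1))^2 := by ring
  have h3 : ((n:ℝ)+2)^(2*n+2) = (((n:ℝ)+2)^(n+1))^2 := by rw [← pow_mul]; ring_nf
  rw [h2, h3]
  apply pow_le_pow_left₀ (by positivity) hb

-- C3 : S^(n+2) < c² where S = n(n+1)/(n+2)², c = n/(2(n+2))
theorem C3 (n : ℕ) (hn : 1 ≤ n) :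
    ((n:ℝ)*((n:ℝ)+1)/((n:ℝ)+2)^2)^(n+2) < ((n:ℝ)/(2*((n:ℝ)+2)))^2 := by
  have hn0 : (0:ℝ) < n := by exact_mod_cast hn
  have ha : (0:ℝ) < (n:ℝ)+2 := by positivity
  rw [div_pow, div_pow, div_lt_div_iff₀ (by positivity) (by positivity)]
  have h := C2 n hn
  have key : ((n:ℝ)*((n:ℝ)+1))^(n+2) * (2*((n:ℝ)+2))^2
      = (4 * (n:ℝ)^n * ((n:ℝ)+1)^(n+2)) * ((n:ℝ)^2 * ((n:ℝ)+2)^2) := by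
    rw [mul_pow, pow_add (n:ℝ) n 2]; ring
  have key2 : (n:ℝ)^2 * (((n:ℝ)+2)^2)^(n+2)
      = ((n:ℝ)+2)^(2*n+2) * ((n:ℝ)^2 * ((n:ℝ)+2)^2) := by
    rw [← pow_mul, show 2*(n+2) = (2*n+2)+2 by ring, pow_add]; ring
  rw [key, key2]
  exact mul_lt_mul_of_pos_right h (by positivity)



theorem key (n : ℕ) (hn : 1 ≤ n) (t : ℝ) (ht0 : 0 ≤ t) (ht1 : t < 1) :
    t ^ n * |((n:ℝ)+2) * t^2 - ((n:ℝ)+1)| < 1 := by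
  have ht2 : t^2 < 1 := by nlinarith
  have hn0 : (0:ℝ) < n := by exact_mod_cast hn
  have ha : (0:ℝ) < (n:ℝ)+2 := by positivity
  rcases le_or_gt ((n:ℝ)+1) (((n:ℝ)+2) * t^2) with h | h
  · rw [abs_of_nonneg (by linarith)]
    have hx : ((n:ℝ)+2)*t^2 - ((n:ℝ)+1) < 1 := by nlinarith
    have h1 : t^n ≤ 1 := pow_le_one₀ ht0 ht1.le
    calc t^n * (((n:ℝ)+2)*t^2 - ((n:ℝ)+1)) ≤ 1 * (((n:ℝ)+2)*t^2 - ((n:ℝ)+1)) :=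
          mul_le_mul_of_nonneg_right h1 (by linarith)
      _ < 1 := by linarith
  · rw [abs_of_neg (by linarith)]
    set u : ℝ := t^2 with hu_def
    have hu : 0 ≤ u := by positivity
    set v : ℝ := ((n:ℝ)+1) - ((n:ℝ)+2)*u with hv_def
    have hv : 0 < v := by simp only [hv_def]; linarith
    set c : ℝ := (n:ℝ)/(2*((n:ℝ)+2)) with hc_def
    have hc : 0 < c := by positivity
    set x₂ : ℝ := c * v with hx2_def
    have hx2 : 0 ≤ x₂ := by positivity
    set w₁ : ℝ := (n:ℝ)/((n:ℝ)+2) with hw1_def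
    set w₂ : ℝ := 2/((n:ℝ)+2) with hw2_def
    have hAM := Real.geom_mean_le_arith_mean2_weighted (by positivity : (0:ℝ) ≤ w₁)
      (by positivity : (0:ℝ) ≤ w₂) hu hx2 (by rw [hw1_def, hw2_def]; field_simp)
    have hS : w₁*u + w₂*x₂ = (n:ℝ)*((n:ℝ)+1)/((n:ℝ)+2)^2 := by
      rw [hw1_def, hw2_def, hx2_def, hc_def, hv_def]; field_simp; ring
    have hG0 : 0 ≤ u ^ w₁ * x₂ ^ w₂ := by positivity
    have hpow : (u ^ w₁ * x₂ ^ w₂)^(n+2) ≤ ((n:ℝ)*((n:ℝ)+1)/((n:ℝ)+2)^2)^(n+2) :=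
      pow_le_pow_left₀ hG0 (hAM.trans_eq hS) _
    have hGeq : (u ^ w₁ * x₂ ^ w₂)^(n+2) = u^n * x₂^2 := by
      rw [mul_pow, ← Real.rpow_natCast (u ^ w₁) (n+2), ← Real.rpow_natCast (x₂ ^ w₂) (n+2),
        ← Real.rpow_mul hu, ← Real.rpow_mul hx2]
      have e1 : w₁ * ((n+2:ℕ):ℝ) = ((n:ℕ):ℝ) := by
        rw [hw1_def]; push_cast; field_simp
      have e2 : w₂ * ((n+2:ℕ):ℝ) = ((2:ℕ):ℝ) := by
        rw [hw2_def]; push_cast; field_simp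
      rw [e1, e2, Real.rpow_natCast, Real.rpow_natCast]
    have h1 : u^n * x₂^2 < c^2 := by
      rw [← hGeq]; exact hpow.trans_lt (C3 n hn)
    have h2 : u^n * v^2 < 1 := by
      have : c^2 * (u^n * v^2) < c^2 * 1 := by
        rw [mul_one]; calc c^2 * (u^n * v^2) = u^n * x₂^2 := by rw [hx2_def]; ring
          _ < c^2 := h1
      exact lt_of_mul_lt_mul_left this (by positivity)
    have hsq : (t^n)^2 = (t^2)^n := by rw [← pow_mul, ← pow_mul, mul_comm]
    have h3 : (t^n * v)^2 < 1 := by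
      calc (t^n * v)^2 = u^n * v^2 := by rw [mul_pow, hsq]
        _ < 1 := h2
    have h4 : 0 ≤ t^n * v := by positivity
    have h5 : t^n * -(((n:ℝ)+2)*t^2 - ((n:ℝ)+1)) = t^n * v := by rw [hv_def]; ring
    rw [h5]
    nlinarith [h3, h4]


/-- For any integer `p ≥ 3` and real `|r| < 1`, both
`1 + (p r^p − (p−1) r^(p−2))` and `1 − (p r^p − (p−1) r^(p−2))` are strictly positive. -/
theorem stmt_2 (p : ℕ) (hp : 3 ≤ p) (r : ℝ) (hr : |r| < 1) :
    0 < 1 + ((p : ℝ) * r ^ p - ((p : ℝ) - 1) * r ^ (p - 2)) ∧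
    0 < 1 - ((p : ℝ) * r ^ p - ((p : ℝ) - 1) * r ^ (p - 2)) := by
  obtain ⟨n, rfl⟩ : ∃ n, p = n + 2 := ⟨p - 2, by omega⟩
  have hn : 1 ≤ n := by omega
  have hk := key n hn |r| (abs_nonneg r) hr
  have habs : |(((n+2:ℕ)):ℝ) * r ^ (n+2) - ((((n+2:ℕ)):ℝ) - 1) * r ^ ((n+2) - 2)| < 1 := by
    have e : (((n+2:ℕ)):ℝ) * r ^ (n+2) - ((((n+2:ℕ)):ℝ) - 1) * r ^ n
        = r^n * (((n:ℝ)+2) * r^2 - ((n:ℝ)+1)) := by push_cast; ring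
    rw [Nat.add_sub_cancel, e, abs_mul, abs_pow,
      show ((n:ℝ)+2) * r^2 = ((n:ℝ)+2) * |r|^2 by rw [sq_abs]]
    exact hk
  obtain ⟨h1, h2⟩ := abs_lt.mp habs
  constructor <;> linarith
end

section
/- Let W¹(ρ), W²(ρ) be jointly Gaussian random variables with a joint law depending polynomially on a correlation parameter ρ (matrices with covariances Cov(W¹_{ij}, W²_{kl}) proportional to ρ and Cov(W^m_{ij}, W^m_{kl}) independent of ρ as in the GOE-coupled case), and let g be a polynomial function. Define ĝ(ρ) = E[g(W¹(ρ)) g(W²(ρ))]. Then ĝ is a polynomial in ρ all of whose derivatives at ρ = 0 are non-negative; consequently ĝ is convex on [0,1] and satisfies |ĝ(−ρ) − ĝ(0)| ≤ ĝ(ρ) − ĝ(0) ≤ ρ(ĝ(1) − ĝ(0)) for every ρ ∈ [0,1]. -/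
/-!
Write `g` as a polynomial `T` in the independent standard Gaussian coordinates of the matrices and
expand `T = ∑ₑ cₑ Heₑ` in products of probabilists' Hermite polynomials. For independent standard
Gaussian vectors `X, Y, Z` and `a² + b² = a² + b'² = 1`, Gaussian integration by parts shows that
integrating out `X` turns `Heₑ(aX + bZ)` into `b^|e| Heₑ(Z)`, and orthogonality of the `Heₑ` then
gives `E[Heₑ(aX + bZ) He_f(aY + b'Z)] = δₑf e! (b b')^|e|`. The coupling of `W¹(ρ), W²(ρ)` is of
this form with `b b' = ρ`, so `ĝ(ρ) = ∑ₑ cₑ² e! ρ^|e|` is a polynomial with nonnegative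
coefficients; convexity and the two inequalities follow from that alone.
-/

open MeasureTheory

/-- The standard Gaussian product measure on `ι → ℝ`. -/
noncomputable def stdGaussPi (ι : Type*) [Fintype ι] : Measure (ι → ℝ) :=
  Measure.pi fun _ => ProbabilityTheory.gaussianReal 0 1

/-- A realization of an `N×N` symmetric centered Gaussian Wigner matrix with entry
variances `1 + δ_{i=j}` built from two independent arrays `u, v` of i.i.d. standard
normals: `W_{ij} = √(1+δ_{i=j}) (√(1−|ρ|) u_{ij} + s √|ρ| v_{ij})`, symmetrized.
Taking `s = 1` for the first matrix and `s = sgn(ρ)` for the second, and a common `v`,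
one obtains the joint covariance
`Cov(W^m_{ij}(ρ), W^n_{kl}(ρ)) = δ_{{i,j}={k,l}} (1+δ_{i=j}) (ρ + (1−ρ) δ_{m=n})`. -/
noncomputable def WMat (N : ℕ) (s ρ : ℝ) (u v : Fin N × Fin N → ℝ) :
    Matrix (Fin N) (Fin N) ℝ := fun i j =>
  (if i = j then Real.sqrt 2 else 1) *
    (Real.sqrt (1 - |ρ|) * u (if i ≤ j then (i, j) else (j, i)) +
      s * Real.sqrt |ρ| * v (if i ≤ j then (i, j) else (j, i)))

theorem MvPolynomial.eval_bind₁ {R σ τ : Type*} [CommSemiring R] (x : τ → R)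
    (g : σ → MvPolynomial τ R) (φ : MvPolynomial σ R) :
    eval x (bind₁ g φ) = eval (fun i ↦ eval x (g i)) φ :=
  aeval_bind₁ x g φ

namespace Polynomial

lemma convexOn_eval_of_coeff_nonneg {Q : ℝ[X]} (hQ : ∀ k, 0 ≤ Q.coeff k) :
    ConvexOn ℝ (Set.Ici 0) fun x ↦ Q.eval x := by
  simp_rw [eval_eq_sum_range]
  induction Finset.range (Q.natDegree + 1) using Finset.induction with
  | empty => simpa using convexOn_const (0 : ℝ) (convex_Ici 0)
  | insert k s hk ih =>
    simp only [Finset.sum_insert hk]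
    exact ((convexOn_pow k).smul (hQ k)).add ih

lemma abs_eval_le_eval_abs_of_coeff_nonneg {Q : ℝ[X]} (hQ : ∀ k, 0 ≤ Q.coeff k) (x : ℝ) :
    |Q.eval x| ≤ Q.eval |x| := by
  simp_rw [eval_eq_sum_range]
  refine (Finset.abs_sum_le_sum_abs _ _).trans_eq (Finset.sum_congr rfl fun k _ ↦ ?_)
  rw [abs_mul, abs_pow, abs_of_nonneg (hQ k)]

lemma abs_eval_neg_sub_eval_zero_le {Q : ℝ[X]} (hQ : ∀ k, k ≠ 0 → 0 ≤ Q.coeff k) {x : ℝ}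
    (hx : 0 ≤ x) : |Q.eval (-x) - Q.eval 0| ≤ Q.eval x - Q.eval 0 := by
  have hR : ∀ k, 0 ≤ (Q - C (Q.coeff 0)).coeff k := fun k ↦ by
    rcases eq_or_ne k 0 with rfl | hk
    · simp
    · simpa [coeff_C, hk] using hQ k hk
  simpa [coeff_zero_eq_eval_zero, abs_of_nonneg hx] using
    abs_eval_le_eval_abs_of_coeff_nonneg hR (-x)

end Polynomial

namespace MeasureTheory

lemma integral_pi_fin_three_mul {E : Type*} [MeasurableSpace E] {μ : Measure E} [SigmaFinite μ]
    {f g : E → E → ℝ}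
    (hfg : Integrable (fun x : Fin 3 → E ↦ f (x 0) (x 2) * g (x 1) (x 2)) (Measure.pi fun _ ↦ μ)) :
    ∫ x : Fin 3 → E, f (x 0) (x 2) * g (x 1) (x 2) ∂(Measure.pi fun _ ↦ μ) =
      ∫ z, (∫ u, f u z ∂μ) * ∫ u, g u z ∂μ ∂μ := by
  set e := MeasurableEquiv.piFinSuccAbove (fun _ : Fin 3 ↦ E) 2
  have he := measurePreserving_piFinSuccAbove (fun _ : Fin 3 ↦ μ) 2
  set G : E × (Fin 2 → E) → ℝ := fun p ↦ f (p.2 0) p.1 * g (p.2 1) p.1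
  have hG (x : Fin 3 → E) : f (x 0) (x 2) * g (x 1) (x 2) = G (e x) := rfl
  simp_rw [hG] at hfg ⊢
  rw [he.integral_comp',
    integral_prod _ ((he.integrable_comp_emb e.measurableEmbedding (g := G)).1 hfg)]
  congr 1; ext z
  exact ((measurePreserving_piFinTwo fun _ ↦ μ).integral_comp'
    (fun p : E × E ↦ f p.1 z * g p.2 z)).trans (integral_prod_mul (f · z) (g · z))

end MeasureTheory

namespace GaussianHermite

open MeasureTheory ProbabilityTheory Polynomial

local notation "γ" => gaussianReal 0 1

lemma integrable_eval_gaussianReal (p : ℝ[X]) : Integrable (fun x ↦ p.eval x) γ := by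
  simp_rw [eval_eq_sum_range]
  exact integrable_finsetSum _ fun i _ ↦
    (integrable_pow_of_mem_interior_integrableExpSet (X := id) (by simp) i).const_mul _

lemma integrable_eval_mul_gaussianPDFReal (p : ℝ[X]) :
    Integrable (fun x ↦ p.eval x * gaussianPDFReal 0 1 x) := by
  have h := integrable_eval_gaussianReal p
  rw [gaussianReal_of_var_ne_zero _ one_ne_zero, integrable_withDensity_iff_integrable_smul'
    (measurable_gaussianPDF _ _) (ae_of_all _ fun _ ↦ gaussianPDF_lt_top)] at h
  simpa [gaussianPDF, gaussianPDFReal_nonneg, mul_comm] using h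

lemma hasDerivAt_gaussianPDFReal_zero_one (x : ℝ) :
    HasDerivAt (gaussianPDFReal 0 1) (-x * gaussianPDFReal 0 1 x) x := by
  simp only [gaussianPDFReal_def, NNReal.coe_one, sub_zero, mul_one]
  have h : HasDerivAt (fun y : ℝ ↦ -y ^ 2 / 2) (-x) x :=
    ((hasDerivAt_pow 2 x).neg.div_const 2).congr_deriv (by ring)
  exact (h.exp.const_mul _).congr_deriv (by ring)

theorem integral_mul_eval_gaussianReal (p : ℝ[X]) :
    ∫ x, x * p.eval x ∂γ = ∫ x, (derivative p).eval x ∂γ := by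
  rw [integral_gaussianReal_eq_integral_smul one_ne_zero,
    integral_gaussianReal_eq_integral_smul one_ne_zero]
  have key := integral_mul_deriv_eq_deriv_mul_of_integrable
    (u := fun x ↦ p.eval x) (v := gaussianPDFReal 0 1) (u' := fun x ↦ (derivative p).eval x)
    (v' := fun x ↦ -x * gaussianPDFReal 0 1 x)
    (fun x _ ↦ p.hasDerivAt x) (fun x _ ↦ hasDerivAt_gaussianPDFReal_zero_one x)
    ((integrable_eval_mul_gaussianPDFReal (-(X * p))).congr (ae_of_all _ fun x ↦ by
      simp only [eval_neg, eval_mul, eval_X, Pi.mul_apply]; ring))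
    (integrable_eval_mul_gaussianPDFReal _) (integrable_eval_mul_gaussianPDFReal _)
  simp only [neg_mul, mul_neg, integral_neg, neg_inj] at key
  simp only [smul_eq_mul, mul_comm (gaussianPDFReal 0 1 _), ← key]
  congr 1; ext x; ring

-- As a linear map, Gaussian integration by parts turns the Hermite computations below into
-- polynomial algebra.
noncomputable def gaussianExpectation : ℝ[X] →ₗ[ℝ] ℝ where
  toFun p := ∫ x, p.eval x ∂γ
  map_add' p q := by
    simp only [eval_add]
    exact integral_add (integrable_eval_gaussianReal p) (integrable_eval_gaussianReal q)
  map_smul' c p := by simp [integral_const_mul]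

lemma gaussianExpectation_apply (p : ℝ[X]) : gaussianExpectation p = ∫ x, p.eval x ∂γ := rfl

lemma gaussianExpectation_one : gaussianExpectation 1 = 1 := by
  simp [gaussianExpectation_apply]

lemma gaussianExpectation_C_mul (r : ℝ) (p : ℝ[X]) :
    gaussianExpectation (C r * p) = r * gaussianExpectation p := by
  rw [C_mul', map_smul, smul_eq_mul]

lemma gaussianExpectation_C (r : ℝ) : gaussianExpectation (C r) = r := by
  simpa [gaussianExpectation_one] using gaussianExpectation_C_mul r 1

lemma gaussianExpectation_X_mul (p : ℝ[X]) :
    gaussianExpectation (X * p) = gaussianExpectation (derivative p) := by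
  simpa [gaussianExpectation_apply] using integral_mul_eval_gaussianReal p

lemma gaussianExpectation_X : gaussianExpectation X = 0 := by
  simpa using gaussianExpectation_X_mul 1

/-- The adjoint of `d/dx` in `L²(γ)` is `p ↦ X * p - p'`. -/
lemma gaussianExpectation_X_mul_sub_derivative_mul (p q : ℝ[X]) :
    gaussianExpectation ((X * p - derivative p) * q) = gaussianExpectation (p * derivative q) := by
  rw [sub_mul, map_sub, mul_assoc, gaussianExpectation_X_mul, derivative_mul, map_add,
    add_sub_cancel_left]

lemma gaussianExpectation_X_mul_comp (p : ℝ[X]) (c w : ℝ) :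
    gaussianExpectation (X * p.comp (C c * X + C w)) =
      c * gaussianExpectation ((derivative p).comp (C c * X + C w)) := by
  rw [gaussianExpectation_X_mul, derivative_comp, ← gaussianExpectation_C_mul]
  simp

noncomputable def He (n : ℕ) : ℝ[X] := (hermite n).map (Int.castRingHom ℝ)

@[simp] lemma He_zero : He 0 = 1 := by simp [He]

@[simp] lemma He_one : He 1 = X := by simp [He]

lemma He_succ (n : ℕ) : He (n + 1) = X * He n - derivative (He n) := by
  simp [He, hermite_succ, derivative_map]

lemma derivative_He_succ (n : ℕ) : derivative (He (n + 1)) = ((n : ℝ) + 1) • He n := by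
  induction n with
  | zero => simp [He_succ]
  | succ n ih =>
    rw [He_succ (n + 1), derivative_sub, derivative_mul, derivative_X, one_mul, ih,
      derivative_smul, mul_smul_comm, He_succ n]
    push_cast
    module

lemma He_add_two (n : ℕ) : He (n + 2) = X * He (n + 1) - ((n : ℝ) + 1) • He n := by
  rw [He_succ (n + 1), derivative_He_succ]

lemma degree_He (n : ℕ) : (He n).degree = n := by
  rw [He, (hermite_monic n).degree_map, degree_hermite]

lemma leadingCoeff_He (n : ℕ) : (He n).leadingCoeff = 1 :=
  ((hermite_monic n).map _).leadingCoeff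

lemma span_range_He : Submodule.span ℝ (Set.range He) = ⊤ :=
  Sequence.span (S := ⟨He, degree_He⟩) fun n ↦ by simp [leadingCoeff_He]

theorem gaussianExpectation_He_comp (n : ℕ) {c d : ℝ} (hcd : c ^ 2 + d ^ 2 = 1) (v : ℝ) :
    gaussianExpectation ((He n).comp (C c * X + C (d * v))) = d ^ n * (He n).eval v := by
  induction n using Nat.twoStepInduction with
  | zero => simp [gaussianExpectation_one]
  | one =>
    simp [gaussianExpectation_C_mul, gaussianExpectation_C, gaussianExpectation_X]
  | more n ih₀ ih₁ =>
    rw [He_add_two, sub_comp, smul_comp, mul_comp, X_comp, add_mul, map_sub, map_add,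
      map_smul, mul_assoc, gaussianExpectation_C_mul, gaussianExpectation_C_mul,
      gaussianExpectation_X_mul_comp, derivative_He_succ, smul_comp, map_smul, ih₀, ih₁]
    simp only [eval_sub, eval_mul, eval_X, eval_smul, smul_eq_mul]
    linear_combination ((n + 1) * d ^ n * (He n).eval v) * hcd

theorem gaussianExpectation_He_mul_He (m n : ℕ) :
    gaussianExpectation (He m * He n) = if m = n then (m.factorial : ℝ) else 0 := by
  induction m generalizing n with
  | zero =>
    cases n with
    | zero => simp [gaussianExpectation_one]
    | succ n =>
      rw [mul_comm, He_succ, gaussianExpectation_X_mul_sub_derivative_mul]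
      simp
  | succ m ih =>
    rw [He_succ, gaussianExpectation_X_mul_sub_derivative_mul]
    cases n with
    | zero => simp
    | succ n =>
      rw [derivative_He_succ, mul_smul_comm, map_smul, ih, smul_eq_mul]
      split_ifs <;> simp_all [Nat.factorial_succ]

lemma integral_eval_He_affine (n : ℕ) {c d : ℝ} (hcd : c ^ 2 + d ^ 2 = 1) (v : ℝ) :
    ∫ u, (He n).eval (c * u + d * v) ∂γ = d ^ n * (He n).eval v := by
  simpa [gaussianExpectation_apply] using gaussianExpectation_He_comp n hcd v

section Multivariate

variable {κ : Type*} [Fintype κ]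

instance : IsProbabilityMeasure (stdGaussPi κ) := by
  unfold stdGaussPi; infer_instance

noncomputable def mvHe (e : κ → ℕ) : MvPolynomial κ ℝ :=
  ∏ q, Polynomial.aeval (MvPolynomial.X q) (He (e q))

lemma eval_mvHe (e : κ → ℕ) (x : κ → ℝ) :
    MvPolynomial.eval x (mvHe e) = ∏ q, (He (e q)).eval (x q) := by
  refine (map_prod _ _ _).trans (Finset.prod_congr rfl fun q _ ↦ ?_)
  change MvPolynomial.aeval x _ = _
  rw [← Polynomial.aeval_algHom_apply]
  simp

lemma span_range_mvHe : Submodule.span ℝ (Set.range (mvHe (κ := κ))) = ⊤ := by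
  classical
  set M : κ → Set (MvPolynomial κ ℝ) := fun q ↦ Set.range fun m ↦ aeval (MvPolynomial.X q) (He m)
  have hpow (q : κ) (n : ℕ) : MvPolynomial.X q ^ n ∈ Submodule.span ℝ (M q) := by
    have : Submodule.span ℝ (M q) =
        (Submodule.span ℝ (Set.range He)).map (aeval (MvPolynomial.X q)).toLinearMap := by
      rw [Submodule.map_span, ← Set.range_comp]; rfl
    rw [this, span_range_He]
    exact ⟨X ^ n, trivial, by simp⟩
  have hprod (d : κ → ℕ) : ∀ s : Finset κ,
      ∏ q ∈ s, MvPolynomial.X q ^ d q ∈ ∏ q ∈ s, Submodule.span ℝ (M q) := by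
    refine Finset.induction (by simp [Submodule.one_eq_span]) fun q s hq ih ↦ ?_
    rw [Finset.prod_insert hq, Finset.prod_insert hq]
    exact Submodule.mul_mem_mul (hpow q (d q)) ih
  have hle : ∏ q, Submodule.span ℝ (M q) ≤ Submodule.span ℝ (Set.range mvHe) := by
    rw [Submodule.prod_span]
    refine Submodule.span_mono fun _ h ↦ ?_
    obtain ⟨g, hg, rfl⟩ := (Set.mem_fintype_prod _ _).1 h
    choose m hm using hg
    exact ⟨m, by simp only [mvHe, hm]⟩
  refine eq_top_iff.2 fun P _ ↦ ?_
  rw [P.as_sum]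
  refine Submodule.sum_mem _ fun d _ ↦ ?_
  rw [MvPolynomial.monomial_eq, MvPolynomial.C_mul', Finsupp.prod_fintype _ _ fun _ ↦ pow_zero _]
  exact Submodule.smul_mem _ _ (hle (hprod d Finset.univ))

lemma integrable_eval_uncurry {ι : Type*} [Fintype ι] (P : MvPolynomial (ι × κ) ℝ) :
    Integrable (fun x : ι → κ → ℝ ↦ MvPolynomial.eval (fun c ↦ x c.1 c.2) P)
      (Measure.pi fun _ ↦ stdGaussPi κ) := by
  induction P using MvPolynomial.induction_on' with
  | monomial u a =>
    simp_rw [MvPolynomial.eval_monomial, Finsupp.prod_fintype _ _ (fun _ ↦ pow_zero _),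
      Fintype.prod_prod_type]
    exact .const_mul (.fintype_prod fun i ↦ .fintype_prod fun q ↦
      integrable_pow_of_mem_interior_integrableExpSet (X := id) (by simp) (u (i, q))) a
  | add P Q hP hQ =>
    simp only [map_add]
    exact hP.add hQ

lemma integrable_eval_affine_mul_eval_affine (P Q : MvPolynomial κ ℝ) (a b a' b' : ℝ) :
    Integrable (fun x : Fin 3 → κ → ℝ ↦
        MvPolynomial.eval (a • x 0 + b • x 2) P * MvPolynomial.eval (a' • x 1 + b' • x 2) Q)
      (Measure.pi fun _ ↦ stdGaussPi κ) := by
  let σ (i : Fin 3) (c d : ℝ) (q : κ) : MvPolynomial (Fin 3 × κ) ℝ :=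
    MvPolynomial.C c * MvPolynomial.X (i, q) + MvPolynomial.C d * MvPolynomial.X (2, q)
  refine (integrable_eval_uncurry
    (MvPolynomial.bind₁ (σ 0 a b) P * MvPolynomial.bind₁ (σ 1 a' b') Q)).congr
    (ae_of_all _ fun x ↦ ?_)
  simp only [σ, map_mul, map_add, MvPolynomial.eval_bind₁, MvPolynomial.eval_C,
    MvPolynomial.eval_X]
  rfl

lemma integral_eval_mvHe_affine (e : κ → ℕ) {c d : ℝ} (hcd : c ^ 2 + d ^ 2 = 1) (z : κ → ℝ) :
    ∫ x, MvPolynomial.eval (c • x + d • z) (mvHe e) ∂stdGaussPi κ =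
      d ^ (∑ q, e q) * MvPolynomial.eval z (mvHe e) := by
  simp only [eval_mvHe, Pi.add_apply, Pi.smul_apply, smul_eq_mul]
  rw [stdGaussPi, integral_fintype_prod_eq_prod fun q u ↦ (He (e q)).eval (c * u + d * z q)]
  simp only [integral_eval_He_affine _ hcd, Finset.prod_mul_distrib, Finset.prod_pow_eq_pow_sum]

lemma integral_eval_mvHe_mul_mvHe (e f : κ → ℕ) :
    ∫ x, MvPolynomial.eval x (mvHe e) * MvPolynomial.eval x (mvHe f) ∂stdGaussPi κ =
      if e = f then ∏ q, ((e q).factorial : ℝ) else 0 := by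
  simp only [eval_mvHe, ← Finset.prod_mul_distrib]
  rw [stdGaussPi, integral_fintype_prod_eq_prod fun q u ↦ (He (e q)).eval u * (He (f q)).eval u]
  simp only [← eval_mul, ← gaussianExpectation_apply, gaussianExpectation_He_mul_He]
  split_ifs with hef
  · simp [hef]
  · obtain ⟨q, hq⟩ := Function.ne_iff.1 hef
    exact Finset.prod_eq_zero (Finset.mem_univ q) (if_neg hq)

theorem integral_eval_mvHe_mul_mvHe_affine (e f : κ → ℕ) {a b b' : ℝ}
    (hb : a ^ 2 + b ^ 2 = 1) (hb' : a ^ 2 + b' ^ 2 = 1) :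
    ∫ x : Fin 3 → κ → ℝ, MvPolynomial.eval (a • x 0 + b • x 2) (mvHe e) *
        MvPolynomial.eval (a • x 1 + b' • x 2) (mvHe f) ∂(Measure.pi fun _ ↦ stdGaussPi κ) =
      if e = f then (∏ q, ((e q).factorial : ℝ)) * (b * b') ^ (∑ q, e q) else 0 := by
  rw [integral_pi_fin_three_mul (f := fun u z ↦ MvPolynomial.eval (a • u + b • z) (mvHe e))
    (g := fun u z ↦ MvPolynomial.eval (a • u + b' • z) (mvHe f))
    (integrable_eval_affine_mul_eval_affine _ _ _ _ _ _)]
  simp only [integral_eval_mvHe_affine _ hb, integral_eval_mvHe_affine _ hb']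
  simp only [mul_mul_mul_comm, integral_const_mul, integral_eval_mvHe_mul_mvHe]
  split_ifs with hef
  · subst hef; ring
  · simp

theorem exists_coeff_nonneg_integral_eval_mul_eval (P : MvPolynomial κ ℝ) :
    ∃ Q : ℝ[X], (∀ k, 0 ≤ Q.coeff k) ∧ ∀ {a b b' : ℝ}, a ^ 2 + b ^ 2 = 1 → a ^ 2 + b' ^ 2 = 1 →
      ∫ x : Fin 3 → κ → ℝ, MvPolynomial.eval (a • x 0 + b • x 2) P *
          MvPolynomial.eval (a • x 1 + b' • x 2) P ∂(Measure.pi fun _ ↦ stdGaussPi κ) =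
        Q.eval (b * b') := by
  classical
  obtain ⟨c, hc⟩ := Finsupp.mem_span_range_iff_exists_finsupp.1
    (span_range_mvHe (κ := κ) ▸ Submodule.mem_top : P ∈ Submodule.span ℝ (Set.range mvHe))
  have hP (y : κ → ℝ) :
      MvPolynomial.eval y P = ∑ e ∈ c.support, c e * MvPolynomial.eval y (mvHe e) := by
    simp [← hc, Finsupp.sum, map_sum]
  refine ⟨∑ e ∈ c.support, C (c e ^ 2 * ∏ q, ((e q).factorial : ℝ)) * X ^ (∑ q, e q), fun k ↦ ?_,
    fun {a b b'} hb hb' ↦ ?_⟩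
  · rw [finsetSum_coeff]
    refine Finset.sum_nonneg fun e _ ↦ ?_
    rw [coeff_C_mul_X_pow]
    split_ifs <;> positivity
  · simp_rw [hP, Finset.sum_mul_sum, mul_mul_mul_comm (c _)]
    rw [integral_finsetSum _ fun e _ ↦ integrable_finsetSum _ fun f _ ↦
      (integrable_eval_affine_mul_eval_affine _ _ _ _ _ _).const_mul _]
    simp_rw [integral_finsetSum _ fun f _ ↦
      (integrable_eval_affine_mul_eval_affine _ _ _ _ _ _).const_mul _, integral_const_mul,
      integral_eval_mvHe_mul_mvHe_affine _ _ hb hb', mul_ite, mul_zero, Finset.sum_ite_eq,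
      eval_finsetSum]
    refine Finset.sum_congr rfl fun e he ↦ ?_
    rw [if_pos he, eval_mul, eval_C, eval_pow, eval_X, mul_pow]
    ring

end Multivariate

theorem exists_coeff_nonneg_integral_WMat_eq_eval (N : ℕ) (P : MvPolynomial (Fin N × Fin N) ℝ) :
    ∃ Q : ℝ[X], (∀ k, 0 ≤ Q.coeff k) ∧ ∀ ρ ∈ Set.Icc (-1 : ℝ) 1,
      ∫ x : Fin 3 → (Fin N × Fin N → ℝ),
          MvPolynomial.eval (fun q ↦ WMat N 1 ρ (x 0) (x 2) q.1 q.2) P *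
            MvPolynomial.eval (fun q ↦ WMat N (if 0 ≤ ρ then 1 else -1) ρ (x 1) (x 2) q.1 q.2) P
          ∂(Measure.pi fun _ ↦ stdGaussPi (Fin N × Fin N)) = Q.eval ρ := by
  set T := MvPolynomial.bind₁ (fun q : Fin N × Fin N ↦
    MvPolynomial.C (if q.1 = q.2 then √2 else 1) *
      MvPolynomial.X (if q.1 ≤ q.2 then q else (q.2, q.1))) P
  have hT (s ρ : ℝ) (u v : Fin N × Fin N → ℝ) :
      MvPolynomial.eval (fun q ↦ WMat N s ρ u v q.1 q.2) P =
        MvPolynomial.eval (√(1 - |ρ|) • u + (s * √|ρ|) • v) T := by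
    rw [MvPolynomial.eval_bind₁]
    refine congrArg (MvPolynomial.eval · P) (funext fun q ↦ ?_)
    simp [WMat, mul_assoc]
  obtain ⟨Q, hQ, hQT⟩ := exists_coeff_nonneg_integral_eval_mul_eval T
  refine ⟨Q, hQ, fun ρ hρ ↦ ?_⟩
  have hρ' : |ρ| ≤ 1 := abs_le.2 hρ
  have hnorm {t : ℝ} (ht : t ^ 2 = 1) : √(1 - |ρ|) ^ 2 + (t * √|ρ|) ^ 2 = 1 := by
    rw [mul_pow, ht, one_mul, Real.sq_sqrt (by linarith), Real.sq_sqrt (abs_nonneg ρ)]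
    ring
  have hcorr : (1 * √|ρ|) * ((if 0 ≤ ρ then 1 else -1) * √|ρ|) = ρ := by
    rw [one_mul, mul_left_comm, Real.mul_self_sqrt (abs_nonneg ρ)]
    split_ifs with h
    · rw [abs_of_nonneg h, one_mul]
    · rw [abs_of_neg (not_le.1 h), neg_one_mul, neg_neg]
  simp only [hT]
  rw [hQT (hnorm (one_pow 2)) (hnorm (by split_ifs <;> norm_num)), hcorr]

end GaussianHermite

/-- For correlated Gaussian Wigner matrices `W¹(ρ), W²(ρ)` with covariance
`Cov(W^m_{ij}, W^n_{kl}) = δ_{{i,j}={k,l}}(1+δ_{i=j})(ρ + (1−ρ)δ_{m=n})` and a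
polynomial function `g`, the function `ghat(ρ) = E[g(W¹(ρ)) g(W²(ρ))]` is a polynomial in
`ρ` all of whose derivatives at `ρ = 0` are non-negative; consequently `ghat` is convex on
`[0,1]` and `|ghat(−ρ) − ghat(0)| ≤ ghat(ρ) − ghat(0) ≤ ρ(ghat(1) − ghat(0))` for `ρ ∈ [0,1]`. -/
theorem stmt_14 (N : ℕ) (g : Matrix (Fin N) (Fin N) ℝ → ℝ)
    (hg : ∃ P : MvPolynomial (Fin N × Fin N) ℝ,
      ∀ A : Matrix (Fin N) (Fin N) ℝ, g A = MvPolynomial.eval (fun q => A q.1 q.2) P)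
    (ghat : ℝ → ℝ)
    (hghat : ∀ ρ : ℝ, ghat ρ =
      ∫ x : Fin 3 → (Fin N × Fin N → ℝ),
        g (WMat N 1 ρ (x 0) (x 2)) *
          g (WMat N (if 0 ≤ ρ then 1 else -1) ρ (x 1) (x 2))
        ∂(Measure.pi fun _ => stdGaussPi (Fin N × Fin N))) :
    ∃ Q : Polynomial ℝ,
      (∀ ρ ∈ Set.Icc (-1 : ℝ) 1, ghat ρ = Q.eval ρ) ∧
      (∀ k : ℕ, 1 ≤ k → 0 ≤ Q.coeff k) ∧
      ConvexOn ℝ (Set.Icc (0 : ℝ) 1) ghat ∧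
      ∀ ρ ∈ Set.Icc (0 : ℝ) 1,
        |ghat (-ρ) - ghat 0| ≤ ghat ρ - ghat 0 ∧ ghat ρ - ghat 0 ≤ ρ * (ghat 1 - ghat 0) := by
  obtain ⟨P, hP⟩ := hg
  obtain ⟨Q, hQ, hQP⟩ := GaussianHermite.exists_coeff_nonneg_integral_WMat_eq_eval N P
  have hghatQ : ∀ ρ ∈ Set.Icc (-1 : ℝ) 1, ghat ρ = Q.eval ρ := fun ρ hρ ↦ by
    simpa only [hghat, hP] using hQP ρ hρ
  have hsub : Set.Icc (0 : ℝ) 1 ⊆ Set.Icc (-1) 1 := Set.Icc_subset_Icc_left (by norm_num)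
  have hconv : ConvexOn ℝ (Set.Icc 0 1) ghat :=
    ((Polynomial.convexOn_eval_of_coeff_nonneg hQ).subset Set.Icc_subset_Ici_self
      (convex_Icc 0 1)).congr fun ρ hρ ↦ (hghatQ ρ (hsub hρ)).symm
  refine ⟨Q, hghatQ, fun k _ ↦ hQ k, hconv, fun ρ hρ ↦ ⟨?_, ?_⟩⟩
  · rw [hghatQ ρ (hsub hρ), hghatQ 0 (by norm_num),
      hghatQ (-ρ) ⟨by linarith [hρ.2], by linarith [hρ.1]⟩]
    exact Polynomial.abs_eval_neg_sub_eval_zero_le (fun k _ ↦ hQ k) hρ.1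
  · have := hconv.2 (Set.left_mem_Icc.2 zero_le_one) (Set.right_mem_Icc.2 zero_le_one)
      (sub_nonneg.2 hρ.2) hρ.1 (sub_add_cancel 1 ρ)
    simp only [smul_eq_mul, mul_zero, mul_one, zero_add] at this
    linarith
end

section
/- Fix an integer p ≥ 3 and define b₃(r) ± b₄(r) = p(p−1) r^{p−2}(1 − r²) · (r^{p−2} ± 1) / (1 ∓ (r^p − (p−1) r^{p−2}(1 − r²))). Then for every r ∈ (−1,1) with r ≠ 0, both b₃(r) + b₄(r) and b₃(r) − b₄(r) are non-zero. -/
lemma key_sum (q : ℕ) (t : ℝ) (h0 : 0 ≤ t) :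
    ((q:ℝ)+1) * t^q ≤ ∑ i ∈ Finset.range (q+1), (t^2)^i := by
  have hrefl : ∑ i ∈ Finset.range (q+1), (t^2)^(q - i)
      = ∑ i ∈ Finset.range (q+1), (t^2)^i := by
    have := Finset.sum_range_reflect (fun i => (t^2)^i) (q+1)
    simpa using this
  have hterm : ∀ i ∈ Finset.range (q+1), 2 * t^q ≤ (t^2)^i + (t^2)^(q-i) := by
    intro i hi
    have hiq : i ≤ q := Nat.lt_succ_iff.mp (Finset.mem_range.mp hi)
    have h1 : (t^2)^i = (t^i)^2 := by ring
    have h2 : (t^2)^(q-i) = (t^(q-i))^2 := by ring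
    have h3 : t^i * t^(q-i) = t^q := by
      rw [← pow_add]; congr 1; omega
    nlinarith [sq_nonneg (t^i - t^(q-i))]
  have hsum : ∑ i ∈ Finset.range (q+1), (2 * t^q)
      ≤ ∑ i ∈ Finset.range (q+1), ((t^2)^i + (t^2)^(q-i)) :=
    Finset.sum_le_sum hterm
  rw [Finset.sum_add_distrib, hrefl, Finset.sum_const, Finset.card_range,
    nsmul_eq_mul] at hsum
  push_cast at hsum
  linarith

lemma key_ineq (q : ℕ) (t : ℝ) (h0 : 0 < t) (h1 : t < 1) :
    ((q:ℝ)+1) * t^q * (1 - t^2) < 1 := by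
  have hsum := key_sum q t h0.le
  have hgeom : (∑ i ∈ Finset.range (q+1), (t^2)^i) * (1 - t^2)
      = 1 - (t^2)^(q+1) := by
    have := geom_sum_mul (t^2) (q+1)
    nlinarith [this]
  have ht2 : (0:ℝ) < (t^2)^(q+1) := pow_pos (by positivity) _
  have hpos : (0:ℝ) < 1 - t^2 := by nlinarith
  calc ((q:ℝ)+1) * t^q * (1 - t^2)
      ≤ (∑ i ∈ Finset.range (q+1), (t^2)^i) * (1 - t^2) :=
        mul_le_mul_of_nonneg_right hsum hpos.le
    _ = 1 - (t^2)^(q+1) := hgeom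
    _ < 1 := by linarith

/-- For `p ≥ 3` and `r ∈ (−1,1)`, `r ≠ 0`, both
`b₃(r) + b₄(r) = p(p−1) r^(p−2)(1−r²)(r^(p−2)+1)/(1 − (r^p − (p−1) r^(p−2)(1−r²)))` and
`b₃(r) − b₄(r) = p(p−1) r^(p−2)(1−r²)(r^(p−2)−1)/(1 + (r^p − (p−1) r^(p−2)(1−r²)))`
are non-zero. -/
theorem stmt_17 (p : ℕ) (hp : 3 ≤ p) (r : ℝ) (hr : r ∈ Set.Ioo (-1 : ℝ) 1) (hr0 : r ≠ 0) :
    (p : ℝ) * ((p : ℝ) - 1) * r ^ (p - 2) * (1 - r ^ 2) * (r ^ (p - 2) + 1) /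
        (1 - (r ^ p - ((p : ℝ) - 1) * r ^ (p - 2) * (1 - r ^ 2))) ≠ 0 ∧
    (p : ℝ) * ((p : ℝ) - 1) * r ^ (p - 2) * (1 - r ^ 2) * (r ^ (p - 2) - 1) /
        (1 + (r ^ p - ((p : ℝ) - 1) * r ^ (p - 2) * (1 - r ^ 2))) ≠ 0 := by
  obtain ⟨hr1, hr2⟩ := hr
  obtain ⟨q, rfl⟩ : ∃ q, p = q + 2 := ⟨p - 2, by omega⟩
  have hq1 : 1 ≤ q := by omega
  have hq2 : q + 2 - 2 = q := by omega
  rw [hq2]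
  set t := |r| with ht
  have ht0 : 0 < t := abs_pos.mpr hr0
  have ht1 : t < 1 := abs_lt.mpr ⟨hr1, hr2⟩
  have ht2 : t^2 = r^2 := sq_abs r
  have hr2sq : r^2 < 1 := by nlinarith
  have hr2nn : 0 ≤ r^2 := sq_nonneg r
  have hE : r ^ (q+2) - (((q:ℕ)+2 : ℕ) - 1 : ℝ) * r ^ q * (1 - r ^ 2)
      = r^q * (((q:ℝ)+2) * r^2 - ((q:ℝ)+1)) := by
    push_cast; ring
  set E : ℝ := r^q * (((q:ℝ)+2) * r^2 - ((q:ℝ)+1)) with hEdef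
  have habs : |E| < 1 := by
    have h1 : |E| = t^q * |((q:ℝ)+2) * r^2 - ((q:ℝ)+1)| := by
      rw [hEdef, abs_mul, abs_pow]
    have htq1 : t^q ≤ 1 := pow_le_one₀ ht0.le ht1.le
    have htqnn : 0 ≤ t^q := pow_nonneg ht0.le q
    rcases le_or_gt ((q:ℝ)+1) (((q:ℝ)+2) * r^2) with h | h
    · have hX1 : ((q:ℝ)+2) * r^2 - ((q:ℝ)+1) < 1 := by
        have : ((q:ℝ)+2) * r^2 < ((q:ℝ)+2) * 1 :=
          mul_lt_mul_of_pos_left hr2sq (by positivity)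
        linarith
      have hinner : |((q:ℝ)+2) * r^2 - ((q:ℝ)+1)| = ((q:ℝ)+2) * r^2 - ((q:ℝ)+1) :=
        abs_of_nonneg (by linarith)
      rw [h1, hinner]
      nlinarith [mul_nonneg (by linarith : (0:ℝ) ≤ 1 - t^q)
        (by linarith : (0:ℝ) ≤ ((q:ℝ)+2) * r^2 - ((q:ℝ)+1))]
    · have hinner : |((q:ℝ)+2) * r^2 - ((q:ℝ)+1)| = -(((q:ℝ)+2) * r^2 - ((q:ℝ)+1)) :=
        abs_of_neg (by linarith)
      rw [h1, hinner]
      have hk := key_ineq q t ht0 ht1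
      rw [ht2] at hk
      nlinarith [mul_nonneg htqnn hr2nn]
  obtain ⟨habs1, habs2⟩ := abs_lt.mp habs
  have hde1 : 1 - (r ^ (q+2) - (((q:ℕ)+2 : ℕ) - 1 : ℝ) * r ^ q * (1 - r ^ 2)) ≠ 0 := by
    rw [hE]; intro h; linarith
  have hde2 : 1 + (r ^ (q+2) - (((q:ℕ)+2 : ℕ) - 1 : ℝ) * r ^ q * (1 - r ^ 2)) ≠ 0 := by
    rw [hE]; intro h; linarith
  have hpn : ((q:ℕ)+2 : ℕ) ≠ 0 := by omega
  have hpnR : (((q:ℕ)+2 : ℕ) : ℝ) ≠ 0 := Nat.cast_ne_zero.mpr hpn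
  have hpn1 : (((q:ℕ)+2 : ℕ) : ℝ) - 1 ≠ 0 := by
    push_cast
    have : (0:ℝ) ≤ (q:ℝ) := Nat.cast_nonneg q
    intro h; linarith
  have hrp : r ^ q ≠ 0 := pow_ne_zero _ hr0
  have h1r2 : 1 - r^2 ≠ 0 := by intro h; linarith
  have hrq1 : |r ^ q| < 1 := by
    rw [abs_pow]
    exact pow_lt_one₀ ht0.le ht1 (by omega)
  obtain ⟨hrq1a, hrq1b⟩ := abs_lt.mp hrq1
  have hnum1 : r ^ q + 1 ≠ 0 := by intro h; linarith
  have hnum2 : r ^ q - 1 ≠ 0 := by intro h; linarith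
  exact ⟨div_ne_zero (mul_ne_zero (mul_ne_zero (mul_ne_zero
      (mul_ne_zero hpnR hpn1) hrp) h1r2) hnum1) hde1,
    div_ne_zero (mul_ne_zero (mul_ne_zero (mul_ne_zero
      (mul_ne_zero hpnR hpn1) hrp) h1r2) hnum2) hde2⟩
end
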